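/- For the LCG x_{k+1} = a·x_k + c over ZMod (2^m) with a ≡ 1 (mod 4) and c odd, the sequence x_0, x_1, x_2, … has period exactly 2^m (it is a full-period generator, visiting every residue modulo 2^m). -/

import Mathlib

/-!
Unrolling the recurrence gives `x (k + T) = a ^ T * x k + c * (1 + a + ⋯ + a ^ (T - 1))`. Since
`(a - 1) * x 0 + c` is odd, hence a unit modulo `2 ^ m`, `T` is a period exactly when
`1 + a + ⋯ + a ^ (T - 1) ≡ 0 (mod 2 ^ m)`. For `a ≡ 1 (mod 4)` the lifting-the-exponent lemma
shows that this geometric sum has the same `2`-adic valuation as `T`, so the periods are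
precisely the multiples of `2 ^ m`.
-/

open Finset

theorem affine_iterate_add {R : Type*} [CommSemiring R] {a c : R} {x : ℕ → R}
    (hrec : ∀ k, x (k + 1) = a * x k + c) (k T : ℕ) :
    x (k + T) = a ^ T * x k + c * ∑ i ∈ range T, a ^ i := by
  induction T with
  | zero => simp
  | succ T ih =>
    rw [← add_assoc, hrec, ih, geom_sum_succ]
    ring

theorem affine_periodic_iff_geom_sum_eq_zero {R : Type*} [CommRing R] {a c : R} {x : ℕ → R}
    (hrec : ∀ k, x (k + 1) = a * x k + c) (hu : IsUnit ((a - 1) * x 0 + c)) (T : ℕ) :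
    (∀ k, x (k + T) = x k) ↔ ∑ i ∈ range T, a ^ i = 0 := by
  have hpow : a ^ T = (∑ i ∈ range T, a ^ i) * (a - 1) + 1 := by rw [geom_sum_mul]; ring
  constructor
  · intro hper
    have h0 := hper 0
    rw [affine_iterate_add hrec, hpow] at h0
    refine hu.mul_left_eq_zero.mp ?_
    linear_combination h0
  · intro hsum k
    rw [affine_iterate_add hrec, hpow, hsum]
    ring

theorem ZMod.isUnit_one_add_two_mul (m : ℕ) (y : ZMod (2 ^ m)) : IsUnit (1 + 2 * y) := by
  refine IsNilpotent.isUnit_one_add ((Commute.all 2 y).isNilpotent_mul_right ⟨m, ?_⟩)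
  exact_mod_cast ZMod.natCast_self (2 ^ m)

theorem Int.emultiplicity_two_geom_sum {a : ℤ} (ha : 4 ∣ a - 1) (T : ℕ) :
    emultiplicity 2 (∑ i ∈ Finset.range T, a ^ i) = emultiplicity 2 (T : ℤ) := by
  rcases eq_or_ne a 1 with rfl | hne
  · simp
  have hfin : emultiplicity 2 (a - 1) ≠ ⊤ :=
    finiteMultiplicity_iff_emultiplicity_ne_top.mp
      (Int.finiteMultiplicity_iff.mpr ⟨by decide, sub_ne_zero.mpr hne⟩)
  have hodd : ¬ 2 ∣ a := by omega
  have hlte := Int.two_pow_sub_pow' T (y := 1) ha hodd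
  rw [one_pow, ← geom_sum_mul, emultiplicity_mul Int.prime_two, add_comm] at hlte
  exact WithTop.add_left_cancel hfin hlte

theorem Int.two_pow_dvd_geom_sum_iff {a : ℤ} (ha : 4 ∣ a - 1) (m T : ℕ) :
    2 ^ m ∣ ∑ i ∈ Finset.range T, a ^ i ↔ 2 ^ m ∣ (T : ℤ) := by
  rw [pow_dvd_iff_le_emultiplicity, pow_dvd_iff_le_emultiplicity,
    Int.emultiplicity_two_geom_sum ha]

theorem lcg_full_period_general (m : ℕ) (a c : ℕ) (ha : a % 4 = 1) (hc : Odd c)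
    (x : ℕ → ZMod (2 ^ m)) (hrec : ∀ k, x (k + 1) = a * x k + c) :
    IsLeast {T : ℕ | 0 < T ∧ ∀ k, x (k + T) = x k} (2 ^ m) := by
  obtain ⟨d, rfl⟩ := hc
  have hunit : IsUnit (((a : ZMod (2 ^ m)) - 1) * x 0 + ↑(2 * d + 1)) := by
    obtain ⟨q, rfl⟩ : ∃ q, a = 4 * q + 1 := ⟨a / 4, by omega⟩
    convert ZMod.isUnit_one_add_two_mul m (2 * q * x 0 + d) using 1
    push_cast
    ring
  have hperiod (T : ℕ) : (∀ k, x (k + T) = x k) ↔ 2 ^ m ∣ T := by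
    rw [affine_periodic_iff_geom_sum_eq_zero hrec hunit, ← Int.natCast_dvd_natCast, Nat.cast_pow,
      Nat.cast_ofNat, ← Int.two_pow_dvd_geom_sum_iff (a := a) (by omega)]
    simpa using ZMod.intCast_zmod_eq_zero_iff_dvd (∑ i ∈ range T, (a : ℤ) ^ i) (2 ^ m)
  refine ⟨⟨by positivity, (hperiod _).mpr dvd_rfl⟩, fun T ⟨hT, hper⟩ => ?_⟩
  exact Nat.le_of_dvd hT ((hperiod T).mp hper)

/-- Hull–Dobell theorem for modulus `2^m`: if `a ≡ 1 (mod 4)` and `c` is odd, the LCG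
`x_{k+1} = a·x_k + c (mod 2^m)` has period exactly `2^m`. -/
theorem lcg_full_period (m : ℕ) (hm : 1 ≤ m) (a c : ℕ) (ha : a % 4 = 1) (hc : Odd c)
    (x : ℕ → ZMod (2 ^ m)) (hrec : ∀ k, x (k + 1) = a * x k + c) :
    IsLeast {T : ℕ | 0 < T ∧ ∀ k, x (k + T) = x k} (2 ^ m) :=
  lcg_full_period_general m a c ha hc x hrec
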